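/- There exist a ℚ(q)-algebra homomorphism Δ: U⁺ → U⁺ ⊗ U⁺ with Δ(E_i) = K_{α_i} ⊗ E_i + E_i ⊗ K_{α_i - γ_i} and Δ(K_λ) = K_λ ⊗ K_λ, a ℚ(q)-algebra homomorphism ε: U⁺ → ℚ(q) with ε(E_i) = 0 and ε(K_λ) = 1, and a ℚ(q)-algebra anti-homomorphism S: U⁺ → U⁺ with S(E_i) = -K_{-α_i}·E_i·K_{γ_i - α_i} and S(K_λ) = K_{-λ}, and these maps endow U⁺ with the structure of a Hopf algebra over ℚ(q): Δ is coassociative, ε is a counit for Δ, and S satisfies the antipode axioms m∘(S⊗id)∘Δ = η∘ε = m∘(id⊗S)∘Δ. -/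

import Mathlib

noncomputable section

open scoped TensorProduct

/-- The ground field `ℚ(q)`, rational functions over `ℚ`. -/
abbrev K : Type := RatFunc ℚ

/-- The variable `q ∈ ℚ(q)`. -/
def q : K := RatFunc.X

/-- `b i j = -2` if `j = i` or `j = i+1`, and `b i j = 4 · sgn(j-i) · (-1)^(j-i)` otherwise. -/
def b (i j : ℤ) : ℤ :=
  if j = i ∨ j = i + 1 then -2 else 4 * (j - i).sign * (-1) ^ (j - i).natAbs

/-- The weight `β_i ∈ X = Hom_ℤ(𝔥, ℤ)`, modelled by its values on the basis. -/
def beta (i : ℤ) : ℤ → ℤ := fun j =>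
  if j = i then (-1) ^ i.natAbs * 2
  else if (-1) ^ j.natAbs * j > (-1) ^ j.natAbs * i then (-1) ^ i.natAbs * 4
  else 0

/-- The simple root `α_i ∈ X`, with `⟨α_i, e_j⟩ = δ_{j,i+1} - δ_{j,i}`. -/
def alphaX (i : ℤ) : ℤ → ℤ := fun j =>
  (if j = i + 1 then 1 else 0) - (if j = i then 1 else 0)

/-- The weight `γ_i = -β_{i+1} ∈ X`. -/
def gammaX (i : ℤ) : ℤ → ℤ := fun j => -beta (i + 1) j

/-- Generators of `U⁺`: the `E_i` (`i ∈ ℤ`) and the `K_λ` (`λ ∈ X`, where an element of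
`X = Hom_ℤ(𝔥, ℤ)` is modelled by the function `ℤ → ℤ` of its values on the basis `e_j`). -/
inductive UpGen where
  | E : ℤ → UpGen
  | K : (ℤ → ℤ) → UpGen

/-- `E_i` in the free algebra. -/
def Eι (i : ℤ) : FreeAlgebra K UpGen := FreeAlgebra.ι K (UpGen.E i)

/-- `K_λ` in the free algebra. -/
def Kι (lam : ℤ → ℤ) : FreeAlgebra K UpGen := FreeAlgebra.ι K (UpGen.K lam)

/-- The defining relations of `U⁺`:
`K_λK_μ = K_{λ+μ}`, `K_0 = 1`, `K_λE_i = q^{⟨λ,α_i^∨⟩}E_iK_λ`,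
`E_iE_j = q^{b_{ij}}E_jE_i` for `|i-j| > 1`, and the two Serre-type relations,
where `⟨λ, α_i^∨⟩ = λ(i+1) - λ(i)` and `[2] = q + q⁻¹`. -/
inductive UpRel : FreeAlgebra K UpGen → FreeAlgebra K UpGen → Prop
  | kk (lam mu : ℤ → ℤ) : UpRel (Kι lam * Kι mu) (Kι (lam + mu))
  | k0 : UpRel (Kι 0) 1
  | ke (lam : ℤ → ℤ) (i : ℤ) :
      UpRel (Kι lam * Eι i) ((q ^ (lam (i + 1) - lam i)) • (Eι i * Kι lam))
  | distant (i j : ℤ) (h : 1 < |i - j|) :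
      UpRel (Eι i * Eι j) ((q ^ b i j) • (Eι j * Eι i))
  | serre_up (i : ℤ) :
      UpRel ((q ^ (3 : ℤ)) • (Eι i * Eι i * Eι (i + 1)) -
          (q + q⁻¹) • (Eι i * Eι (i + 1) * Eι i) +
          (q ^ (-3 : ℤ)) • (Eι (i + 1) * Eι i * Eι i)) 0
  | serre_down (i : ℤ) :
      UpRel ((q ^ (-3 : ℤ)) • (Eι i * Eι i * Eι (i - 1)) -
          (q + q⁻¹) • (Eι i * Eι (i - 1) * Eι i) +
          (q ^ (3 : ℤ)) • (Eι (i - 1) * Eι i * Eι i)) 0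

/-- The positive Borel part `U⁺`. -/
abbrev Up : Type := RingQuot UpRel

/-- The generator `E_i ∈ U⁺`. -/
def EgP (i : ℤ) : Up := RingQuot.mkAlgHom K UpRel (Eι i)

/-- The generator `K_λ ∈ U⁺`. -/
def KgP (lam : ℤ → ℤ) : Up := RingQuot.mkAlgHom K UpRel (Kι lam)

/-! Each of `Δ`, `ε` and the antipode, the latter as an algebra map `U⁺ → (U⁺)ᵐᵒᵖ`, is defined on
the free algebra and kills the defining relations. Apart from the relations among the `K`'s and
the Serre relations, these say that two elements `q`-commute, which is stable under sums,
products, tensor products and passing to the opposite algebra; the exponents match because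
`⟨γ_i, α_j^∨⟩ = -b_{ij}`. For the Serre relations write `Δ E_i = A_i + B_i` with
`A_i = K_{α_i} ⊗ E_i` and `B_i = E_i ⊗ K_{α_i - γ_i}`: the `A`'s and the `B`'s satisfy the Serre
relations separately, and `B_j A_i = q^{b_{ji}} A_i B_j`, with exactly the exponents that make the
mixed terms cancel. The antipode sends `E_i` to `-K_{γ_i - 2α_i} E_i`; reversing the order of a
Serre expression turns `s` into `-s`, and moving the `K`'s to the left changes it by
`b_{ji} - b_{ij} = 2s`.
Coassociativity and the counit axioms are equalities of algebra maps, hence checked on generators.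
Since `S` is an antihomomorphism, the elements satisfying an antipode axiom form a subalgebra, so
these too are checked on generators. -/

section QCommutation

variable {F A : Type*} [Field F] [Ring A] [Algebra F A]

def QCommute (q : F) (n : ℤ) (x y : A) : Prop := x * y = q ^ n • (y * x)

namespace QCommute

variable {q : F} {m n : ℤ} {x y z : A}

theorem symm (hq : q ≠ 0) (h : QCommute q n x y) : QCommute q (-n) y x := by
  rw [QCommute, h, smul_smul, ← zpow_add₀ hq, neg_add_cancel, zpow_zero, one_smul]

theorem of_commute (h : Commute x y) : QCommute q 0 x y := by
  rw [QCommute, zpow_zero, one_smul, h.eq]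

theorem add_left (h : QCommute q n x z) (h' : QCommute q n y z) : QCommute q n (x + y) z := by
  rw [QCommute, add_mul, mul_add, smul_add, h, h']

theorem add_right (h : QCommute q n x y) (h' : QCommute q n x z) : QCommute q n x (y + z) := by
  rw [QCommute, add_mul, mul_add, smul_add, h, h']

theorem neg_left (h : QCommute q n x y) : QCommute q n (-x) y := by
  rw [QCommute, neg_mul, mul_neg, smul_neg, h]

theorem neg_right (h : QCommute q n x y) : QCommute q n x (-y) := by
  rw [QCommute, neg_mul, mul_neg, smul_neg, h]

theorem mul_left (hq : q ≠ 0) (h : QCommute q m x z) (h' : QCommute q n y z) :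
    QCommute q (m + n) (x * y) z := by
  rw [QCommute, mul_assoc, h', mul_smul_comm, ← mul_assoc, h, smul_mul_assoc, smul_smul,
    ← zpow_add₀ hq, add_comm, mul_assoc]

theorem mul_right (hq : q ≠ 0) (h : QCommute q m x y) (h' : QCommute q n x z) :
    QCommute q (m + n) x (y * z) := by
  rw [QCommute, ← mul_assoc, h, smul_mul_assoc, mul_assoc, h', mul_smul_comm, smul_smul,
    ← zpow_add₀ hq, mul_assoc]

theorem mul_mul_right (h : QCommute q n x y) (z : A) : x * (y * z) = q ^ n • (y * (x * z)) := by
  rw [← mul_assoc, h, smul_mul_assoc, mul_assoc]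

theorem op (h : QCommute q n x y) : QCommute q n (MulOpposite.op y) (MulOpposite.op x) := by
  rw [QCommute, ← MulOpposite.op_mul, ← MulOpposite.op_mul, h, MulOpposite.op_smul]

theorem tmul {B : Type*} [Ring B] [Algebra F B] {a a' : A} {b b' : B} (hq : q ≠ 0)
    (ha : QCommute q m a a') (hb : QCommute q n b b') :
    QCommute q (m + n) (a ⊗ₜ[F] b) (a' ⊗ₜ[F] b') := by
  rw [QCommute, Algebra.TensorProduct.tmul_mul_tmul, Algebra.TensorProduct.tmul_mul_tmul, ha, hb,
    TensorProduct.smul_tmul_smul, zpow_add₀ hq]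

end QCommute

end QCommutation

section qSerre

variable {F A : Type*} [Field F] [Ring A] [Algebra F A]

def qSerre (q : F) (s : ℤ) (x y : A) : A :=
  q ^ s • (x * x * y) - (q + q⁻¹) • (x * y * x) + q ^ (-s) • (y * x * x)

variable {q : F} {s : ℤ}

theorem AlgHom.map_qSerre {B : Type*} [Ring B] [Algebra F B] (f : A →ₐ[F] B) (x y : A) :
    f (qSerre q s x y) = qSerre q s (f x) (f y) := by
  simp only [qSerre, map_add, map_sub, map_smul, map_mul]

theorem qSerre_zero : qSerre q s (0 : A) 0 = 0 := by
  simp [qSerre]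

theorem qSerre_neg (x y : A) : qSerre q s (-x) (-y) = -qSerre q s x y := by
  simp only [qSerre, neg_mul, mul_neg, neg_neg, smul_neg]
  abel

theorem qSerre_op (x y : A) :
    qSerre q s (MulOpposite.op x) (MulOpposite.op y) = MulOpposite.op (qSerre q (-s) x y) := by
  simp only [qSerre, neg_neg, ← MulOpposite.op_mul, ← MulOpposite.op_smul, ← MulOpposite.op_add,
    ← MulOpposite.op_sub, mul_assoc]
  abel_nf

theorem qSerre_add_add (hq : q ≠ 0) {a a' b b' : A} (h : QCommute q (-2) b a)
    (h' : QCommute q (1 - s) b a') (h'' : QCommute q (1 + s) b' a) :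
    qSerre q s (a + b) (a' + b') = qSerre q s a a' + qSerre q s b b' := by
  have h₁ := h.mul_mul_right
  have h₂ := h'.mul_mul_right
  have h₃ := h''.mul_mul_right
  unfold QCommute at h h' h''
  simp only [qSerre, mul_assoc, mul_add, add_mul, smul_add, h, h', h'', h₁, h₂, h₃,
    smul_mul_assoc, mul_smul_comm, smul_smul]
  match_scalars <;> simp only [zpow_add₀ hq, zpow_sub₀ hq, zpow_neg, zpow_one] <;> field_simp <;>
    ring

theorem qSerre_mul_mul (hq : q ≠ 0) {k k' x y : A} {m c d : ℤ} (hk : Commute k k')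
    (hx : QCommute q m x k) (hx' : QCommute q c x k') (hy : QCommute q d y k) (t : ℤ) :
    qSerre q t (k * x) (k' * y) = q ^ (m + c + d) • (k * k * k' * qSerre q (t + c - d) x y) := by
  have hxxy : k * x * (k * x) * (k' * y) = q ^ (m + (c + c)) • (k * k * k' * (x * x * y)) := by
    simp only [mul_assoc, hx.mul_mul_right, hx'.mul_mul_right, smul_mul_assoc, mul_smul_comm,
      smul_smul, ← zpow_add₀ hq]
  have hxyx : k * x * (k' * y) * (k * x) = q ^ (m + c + d) • (k * k * k' * (x * y * x)) := by
    simp only [mul_assoc, hx.mul_mul_right, hx'.mul_mul_right, hy.mul_mul_right, smul_mul_assoc,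
      mul_smul_comm, smul_smul, ← zpow_add₀ hq, hk.symm.left_comm]
    congr 2; ring
  have hyxx : k' * y * (k * x) * (k * x) = q ^ (m + d + d) • (k * k * k' * (y * x * x)) := by
    simp only [mul_assoc, hx.mul_mul_right, hy.mul_mul_right, smul_mul_assoc, mul_smul_comm,
      smul_smul, ← zpow_add₀ hq, hk.symm.left_comm]
    congr 2; ring
  rw [qSerre, qSerre, hxxy, hxyx, hyxx]
  simp only [mul_add, mul_sub, mul_smul_comm, smul_add, smul_sub, smul_smul]
  match_scalars <;> simp only [zpow_add₀ hq, zpow_sub₀ hq, zpow_neg] <;> field_simp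

theorem qSerre_tmul_of_commute_left {B : Type*} [Ring B] [Algebra F B] {a a' : A}
    (h : Commute a a') (x y : B) :
    qSerre q s (a ⊗ₜ[F] x) (a' ⊗ₜ[F] y) = (a * a * a') ⊗ₜ[F] qSerre q s x y := by
  have h₁ : a * a' * a = a * a * a' := (h.right_comm a).symm
  have h₂ : a' * a * a = a * a * a' := by rw [← h.eq]; exact h₁
  simp only [qSerre, Algebra.TensorProduct.tmul_mul_tmul, TensorProduct.tmul_add,
    TensorProduct.tmul_sub, TensorProduct.tmul_smul, h₁, h₂]

theorem qSerre_tmul_of_commute_right {B : Type*} [Ring B] [Algebra F B] {b b' : B}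
    (h : Commute b b') (x y : A) :
    qSerre q s (x ⊗ₜ[F] b) (y ⊗ₜ[F] b') = qSerre q s x y ⊗ₜ[F] (b * b * b') := by
  have h₁ : b * b' * b = b * b * b' := (h.right_comm b).symm
  have h₂ : b' * b * b = b * b * b' := by rw [← h.eq]; exact h₁
  simp only [qSerre, Algebra.TensorProduct.tmul_mul_tmul, TensorProduct.add_tmul,
    TensorProduct.sub_tmul, TensorProduct.smul_tmul', h₁, h₂]

end qSerre

section AntipodeAxioms

open Coalgebra

variable {R A : Type*} [CommSemiring R] [Semiring A] [Bialgebra R A] {S : A →ₗ[R] A}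

theorem mul'_rTensor_mul_tmul (hS : ∀ a b, S (a * b) = S b * S a) (t : A ⊗[R] A) (y y' : A) :
    LinearMap.mul' R A (S.rTensor A (t * (y ⊗ₜ y'))) =
      S y * LinearMap.mul' R A (S.rTensor A t) * y' := by
  induction t using TensorProduct.induction_on with
  | zero => simp
  | tmul u u' => simp [hS, mul_assoc]
  | add u v hu hv => simp only [add_mul, map_add, hu, hv, mul_add, add_mul]

theorem mul'_lTensor_tmul_mul (hS : ∀ a b, S (a * b) = S b * S a) (t : A ⊗[R] A) (y y' : A) :
    LinearMap.mul' R A (S.lTensor A ((y ⊗ₜ y') * t)) =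
      y * LinearMap.mul' R A (S.lTensor A t) * S y' := by
  induction t using TensorProduct.induction_on with
  | zero => simp
  | tmul u u' => simp [hS, mul_assoc]
  | add u v hu hv => simp only [mul_add, map_add, hu, hv, add_mul]

theorem mul'_rTensor_comul_of_adjoin_eq_top {s : Set A} (hs : Algebra.adjoin R s = ⊤)
    (hS1 : S 1 = 1) (hS : ∀ a b, S (a * b) = S b * S a)
    (h : ∀ a ∈ s, LinearMap.mul' R A (S.rTensor A (comul a)) = algebraMap R A (counit a))
    (a : A) : LinearMap.mul' R A (S.rTensor A (comul a)) = algebraMap R A (counit a) := by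
  have ha : a ∈ Algebra.adjoin R s := hs ▸ Algebra.mem_top
  induction ha using Algebra.adjoin_induction with
  | mem a ha => exact h a ha
  | algebraMap r =>
    rw [Bialgebra.comul_algebraMap, Algebra.TensorProduct.algebraMap_apply, LinearMap.rTensor_tmul,
      LinearMap.mul'_apply, mul_one, Bialgebra.counit_algebraMap, Algebra.algebraMap_eq_smul_one,
      map_smul, hS1]
  | add x y _ _ hx hy => simp only [map_add, hx, hy]
  | mul x y _ _ hx hy =>
    have key : ∀ u, LinearMap.mul' R A (S.rTensor A (comul x * u)) =
        counit (R := R) x • LinearMap.mul' R A (S.rTensor A u) := by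
      intro u
      induction u using TensorProduct.induction_on with
      | zero => simp
      | tmul y y' =>
        rw [mul'_rTensor_mul_tmul hS, hx, ← Algebra.commutes, mul_assoc, ← Algebra.smul_def]
        rfl
      | add u v hu hv => simp only [mul_add, map_add, hu, hv, smul_add]
    rw [Bialgebra.comul_mul, key, hy, Bialgebra.counit_mul, map_mul, Algebra.smul_def]

theorem mul'_lTensor_comul_of_adjoin_eq_top {s : Set A} (hs : Algebra.adjoin R s = ⊤)
    (hS1 : S 1 = 1) (hS : ∀ a b, S (a * b) = S b * S a)
    (h : ∀ a ∈ s, LinearMap.mul' R A (S.lTensor A (comul a)) = algebraMap R A (counit a))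
    (a : A) : LinearMap.mul' R A (S.lTensor A (comul a)) = algebraMap R A (counit a) := by
  have ha : a ∈ Algebra.adjoin R s := hs ▸ Algebra.mem_top
  induction ha using Algebra.adjoin_induction with
  | mem a ha => exact h a ha
  | algebraMap r =>
    rw [Bialgebra.comul_algebraMap, Algebra.TensorProduct.algebraMap_apply, LinearMap.lTensor_tmul,
      LinearMap.mul'_apply, hS1, mul_one, Bialgebra.counit_algebraMap]
  | add x y _ _ hx hy => simp only [map_add, hx, hy]
  | mul x y _ _ hx hy =>
    have key : ∀ u, LinearMap.mul' R A (S.lTensor A (u * comul y)) =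
        counit (R := R) y • LinearMap.mul' R A (S.lTensor A u) := by
      intro u
      induction u using TensorProduct.induction_on with
      | zero => simp
      | tmul z z' =>
        rw [mul'_lTensor_tmul_mul hS, hy, ← Algebra.commutes, mul_assoc, ← Algebra.smul_def]
        rfl
      | add u v hu hv => simp only [add_mul, map_add, hu, hv, smul_add]
    rw [Bialgebra.comul_mul, key, hx, Bialgebra.counit_mul, map_mul, Algebra.smul_def]
    exact Algebra.commutes _ _

end AntipodeAxioms

section Weights

theorem Int.sign_eq_ite (n : ℤ) : n.sign = if 0 < n then 1 else if n = 0 then 0 else -1 := by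
  rcases lt_trichotomy n 0 with h | rfl | h
  · rw [if_neg (by omega), if_neg (by omega), Int.sign_eq_neg_one_iff_neg.mpr h]
  · rfl
  · rw [if_pos h, Int.sign_eq_one_iff_pos.mpr h]

theorem Int.neg_one_pow_natAbs (n : ℤ) : (-1 : ℤ) ^ n.natAbs = if n % 2 = 0 then 1 else -1 := by
  rcases Int.even_or_odd n with h | h
  · rw [if_pos (Int.even_iff.mp h)]
    exact (Int.natAbs_even.mpr h).neg_one_pow
  · rw [if_neg (by have := Int.odd_iff.mp h; omega)]
    exact (Int.natAbs_odd.mpr h).neg_one_pow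

/-- `coroot i λ = ⟨λ, α_i^∨⟩`. -/
def coroot (i : ℤ) : (ℤ → ℤ) →+ ℤ :=
  Pi.evalAddMonoidHom (fun _ => ℤ) (i + 1) - Pi.evalAddMonoidHom (fun _ => ℤ) i

theorem coroot_apply (i : ℤ) (l : ℤ → ℤ) : coroot i l = l (i + 1) - l i := rfl

theorem coroot_alphaX_comm (i j : ℤ) : coroot j (alphaX i) = coroot i (alphaX j) := by
  simp only [coroot_apply, alphaX]
  split_ifs <;> omega

theorem coroot_alphaX_self (i : ℤ) : coroot i (alphaX i) = 2 := by
  simp only [coroot_apply, alphaX]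
  split_ifs <;> omega

theorem coroot_gammaX (i j : ℤ) : coroot j (gammaX i) = -b i j := by
  simp only [coroot_apply, gammaX, beta, b, Int.neg_one_pow_natAbs, Int.sign_eq_ite]
  split_ifs <;> omega

theorem b_self (i : ℤ) : b i i = -2 := by simp [b]

theorem b_succ_right (i : ℤ) : b i (i + 1) = -2 := by simp [b]

theorem b_succ_left (i : ℤ) : b (i + 1) i = 4 := by
  rw [b, if_neg (by omega), show i - (i + 1) = -1 by ring]
  rfl

theorem b_pred_right (i : ℤ) : b i (i - 1) = 4 := by
  rw [b, if_neg (by omega), show i - 1 - i = -1 by ring]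
  rfl

theorem b_pred_left (i : ℤ) : b (i - 1) i = -2 := by
  rw [b, if_pos (by omega)]

theorem b_antisymm {i j : ℤ} (h : 1 < |i - j|) : b j i = -b i j := by
  rw [lt_abs] at h
  rw [b, b, if_neg (by omega), if_neg (by omega), ← neg_sub, Int.sign_neg, Int.natAbs_neg]
  ring

def antipodeWeight (i : ℤ) : ℤ → ℤ := gammaX i - 2 • alphaX i

theorem coroot_antipodeWeight (i j : ℤ) :
    coroot j (antipodeWeight i) = -b i j - 2 * coroot j (alphaX i) := by
  rw [antipodeWeight, map_sub, map_nsmul, coroot_gammaX, nsmul_eq_mul, Nat.cast_ofNat]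

end Weights

theorem q_ne_zero : q ≠ 0 := RatFunc.X_ne_zero

structure SatisfiesUpRel {A : Type*} [Ring A] [Algebra K A] (e : ℤ → A) (k : (ℤ → ℤ) → A) :
    Prop where
  k_mul_k : ∀ l m, k l * k m = k (l + m)
  k_zero : k 0 = 1
  k_qcomm_e : ∀ l i, QCommute q (coroot i l) (k l) (e i)
  e_qcomm_e : ∀ i j, 1 < |i - j| → QCommute q (b i j) (e i) (e j)
  qSerre_succ : ∀ i, qSerre q 3 (e i) (e (i + 1)) = 0
  qSerre_pred : ∀ i, qSerre q (-3) (e i) (e (i - 1)) = 0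

namespace Up

section Lift

variable {A : Type*} [Ring A] [Algebra K A]

def lift {e : ℤ → A} {k : (ℤ → ℤ) → A} (h : SatisfiesUpRel e k) : Up →ₐ[K] A :=
  RingQuot.liftAlgHom K ⟨FreeAlgebra.lift K fun | .E i => e i | .K l => k l, by
    have hE (i : ℤ) : FreeAlgebra.lift K (fun | .E i => e i | .K l => k l) (Eι i) = e i :=
      FreeAlgebra.lift_ι_apply _ _
    have hK (l : ℤ → ℤ) : FreeAlgebra.lift K (fun | .E i => e i | .K l => k l) (Kι l) = k l :=
      FreeAlgebra.lift_ι_apply _ _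
    rintro _ _ (⟨l, m⟩ | _ | ⟨l, i⟩ | ⟨i, j, hij⟩ | i | i)
    · simp only [map_mul, hK, h.k_mul_k]
    · rw [hK, map_one, h.k_zero]
    · simp only [map_mul, map_smul, hE, hK]
      exact h.k_qcomm_e l i
    · simp only [map_mul, map_smul, hE]
      exact h.e_qcomm_e i j hij
    · rw [map_zero, ← h.qSerre_succ i, ← hE, ← hE]
      exact AlgHom.map_qSerre _ (Eι _) (Eι _)
    · rw [map_zero, ← h.qSerre_pred i, ← hE, ← hE]
      exact AlgHom.map_qSerre _ (Eι _) (Eι _)⟩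

variable {e : ℤ → A} {k : (ℤ → ℤ) → A} (h : SatisfiesUpRel e k)

theorem lift_E (i : ℤ) : lift h (EgP i) = e i :=
  (RingQuot.liftAlgHom_mkAlgHom_apply _ _ _ _).trans (FreeAlgebra.lift_ι_apply _ _)

theorem lift_K (l : ℤ → ℤ) : lift h (KgP l) = k l :=
  (RingQuot.liftAlgHom_mkAlgHom_apply _ _ _ _).trans (FreeAlgebra.lift_ι_apply _ _)

end Lift

theorem adjoin_eq_top : Algebra.adjoin K (Set.range EgP ∪ Set.range KgP) = ⊤ := by
  have hgen : Set.range EgP ∪ Set.range KgP =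
      RingQuot.mkAlgHom K UpRel '' Set.range (FreeAlgebra.ι K) := by
    ext x
    constructor
    · rintro (⟨i, rfl⟩ | ⟨l, rfl⟩)
      exacts [⟨_, ⟨UpGen.E i, rfl⟩, rfl⟩, ⟨_, ⟨UpGen.K l, rfl⟩, rfl⟩]
    · rintro ⟨_, ⟨g, rfl⟩, rfl⟩
      cases g with
      | E i => exact .inl ⟨i, rfl⟩
      | K l => exact .inr ⟨l, rfl⟩
  rw [hgen, ← AlgHom.map_adjoin, FreeAlgebra.adjoin_range_ι, Algebra.map_top,
    AlgHom.range_eq_top]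
  exact RingQuot.mkAlgHom_surjective K UpRel

theorem algHom_ext {A : Type*} [Semiring A] [Algebra K A] {f g : Up →ₐ[K] A}
    (hE : ∀ i, f (EgP i) = g (EgP i)) (hK : ∀ l, f (KgP l) = g (KgP l)) : f = g := by
  refine AlgHom.ext_of_adjoin_eq_top adjoin_eq_top ?_
  rintro _ (⟨i, rfl⟩ | ⟨l, rfl⟩)
  exacts [hE i, hK l]

theorem satisfiesUpRel : SatisfiesUpRel EgP KgP where
  k_mul_k l m := (map_mul _ _ _).symm.trans (RingQuot.mkAlgHom_rel K (UpRel.kk l m))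
  k_zero := (RingQuot.mkAlgHom_rel K UpRel.k0).trans (map_one _)
  k_qcomm_e l i := by
    have h := RingQuot.mkAlgHom_rel K (UpRel.ke l i)
    rwa [map_mul, map_smul, map_mul] at h
  e_qcomm_e i j hij := by
    have h := RingQuot.mkAlgHom_rel K (UpRel.distant i j hij)
    rwa [map_mul, map_smul, map_mul] at h
  qSerre_succ i := by
    rw [← map_zero (RingQuot.mkAlgHom K UpRel), ← RingQuot.mkAlgHom_rel K (UpRel.serre_up i)]
    exact (AlgHom.map_qSerre _ (Eι _) (Eι _)).symm
  qSerre_pred i := by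
    rw [← map_zero (RingQuot.mkAlgHom K UpRel), ← RingQuot.mkAlgHom_rel K (UpRel.serre_down i)]
    exact (AlgHom.map_qSerre _ (Eι _) (Eι _)).symm

theorem K_mul_K (l m : ℤ → ℤ) : KgP l * KgP m = KgP (l + m) := satisfiesUpRel.k_mul_k l m

theorem K_zero : KgP 0 = 1 := satisfiesUpRel.k_zero

theorem commute_K (l m : ℤ → ℤ) : Commute (KgP l) (KgP m) := by
  rw [Commute, SemiconjBy, K_mul_K, K_mul_K, add_comm]

theorem K_qcomm_E (l : ℤ → ℤ) (i : ℤ) : QCommute q (coroot i l) (KgP l) (EgP i) :=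
  satisfiesUpRel.k_qcomm_e l i

theorem E_qcomm_K (i : ℤ) (l : ℤ → ℤ) : QCommute q (-coroot i l) (EgP i) (KgP l) :=
  (K_qcomm_E l i).symm q_ne_zero

theorem E_qcomm_E {i j : ℤ} (h : 1 < |i - j|) : QCommute q (b i j) (EgP i) (EgP j) :=
  satisfiesUpRel.e_qcomm_e i j h

theorem E_tmul_K_qcomm_K_tmul_E (i j : ℤ) :
    QCommute q (b j i) (EgP j ⊗ₜ[K] KgP (alphaX j - gammaX j)) (KgP (alphaX i) ⊗ₜ[K] EgP i) := by
  convert (E_qcomm_K j (alphaX i)).tmul q_ne_zero (K_qcomm_E (alphaX j - gammaX j) i) using 2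
  rw [map_sub, coroot_gammaX, coroot_alphaX_comm]
  ring

theorem qSerre_comul {s i j : ℤ} (hij : b i j = 1 - s) (hji : b j i = 1 + s)
    (h : qSerre q s (EgP i) (EgP j) = 0) :
    qSerre q s (KgP (alphaX i) ⊗ₜ[K] EgP i + EgP i ⊗ₜ[K] KgP (alphaX i - gammaX i))
      (KgP (alphaX j) ⊗ₜ[K] EgP j + EgP j ⊗ₜ[K] KgP (alphaX j - gammaX j)) = 0 := by
  rw [qSerre_add_add q_ne_zero (b_self i ▸ E_tmul_K_qcomm_K_tmul_E i i)
    (hij ▸ E_tmul_K_qcomm_K_tmul_E j i) (hji ▸ E_tmul_K_qcomm_K_tmul_E i j),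
    qSerre_tmul_of_commute_left (commute_K _ _),
    qSerre_tmul_of_commute_right (commute_K _ _), h, TensorProduct.tmul_zero,
    TensorProduct.zero_tmul, add_zero]

theorem satisfiesUpRel_comul :
    SatisfiesUpRel (fun i => KgP (alphaX i) ⊗ₜ[K] EgP i + EgP i ⊗ₜ[K] KgP (alphaX i - gammaX i))
      (fun l => KgP l ⊗ₜ[K] KgP l) where
  k_mul_k l m := by
    rw [Algebra.TensorProduct.tmul_mul_tmul, K_mul_K]
  k_zero := by
    rw [K_zero, Algebra.TensorProduct.one_def]
  k_qcomm_e l i := by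
    refine .add_right ?_ ?_
    · simpa only [zero_add] using
        (QCommute.of_commute (commute_K l (alphaX i))).tmul q_ne_zero (K_qcomm_E l i)
    · simpa only [add_zero] using
        (K_qcomm_E l i).tmul q_ne_zero (.of_commute (commute_K l (alphaX i - gammaX i)))
  e_qcomm_e i j hij := by
    refine .add_left (.add_right ?_ ?_) (.add_right (E_tmul_K_qcomm_K_tmul_E j i) ?_)
    · simpa only [zero_add] using
        (QCommute.of_commute (commute_K _ _)).tmul q_ne_zero (E_qcomm_E hij)
    · simpa only [b_antisymm hij, neg_neg] using (E_tmul_K_qcomm_K_tmul_E i j).symm q_ne_zero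
    · simpa only [add_zero] using
        (E_qcomm_E hij).tmul q_ne_zero (.of_commute (commute_K _ _))
  qSerre_succ i := qSerre_comul (by rw [b_succ_right]; norm_num) (by rw [b_succ_left]; norm_num)
    (satisfiesUpRel.qSerre_succ i)
  qSerre_pred i := qSerre_comul (by rw [b_pred_right]; norm_num) (by rw [b_pred_left]; norm_num)
    (satisfiesUpRel.qSerre_pred i)

def comul : Up →ₐ[K] Up ⊗[K] Up := lift satisfiesUpRel_comul

theorem comul_E (i : ℤ) :
    comul (EgP i) = KgP (alphaX i) ⊗ₜ[K] EgP i + EgP i ⊗ₜ[K] KgP (alphaX i - gammaX i) :=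
  lift_E _ i

theorem comul_K (l : ℤ → ℤ) : comul (KgP l) = KgP l ⊗ₜ[K] KgP l := lift_K _ l

theorem satisfiesUpRel_counit : SatisfiesUpRel (fun _ => (0 : K)) (fun _ => 1) where
  k_mul_k _ _ := mul_one 1
  k_zero := rfl
  k_qcomm_e _ _ := by simp [QCommute]
  e_qcomm_e _ _ _ := by simp [QCommute]
  qSerre_succ _ := qSerre_zero
  qSerre_pred _ := qSerre_zero

def counit : Up →ₐ[K] K := lift satisfiesUpRel_counit

theorem counit_E (i : ℤ) : counit (EgP i) = 0 := lift_E _ i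

theorem counit_K (l : ℤ → ℤ) : counit (KgP l) = 1 := lift_K _ l

section Antipode

open MulOpposite

theorem K_mul_E_qcomm_K_mul_E {n i j : ℤ} (l m : ℤ → ℤ) (h : QCommute q n (EgP i) (EgP j)) :
    QCommute q (coroot j l - coroot i m + n) (KgP l * EgP i) (KgP m * EgP j) := by
  have h' := QCommute.mul_left q_ne_zero
    (.mul_right q_ne_zero (.of_commute (commute_K l m)) (K_qcomm_E l j))
    (.mul_right q_ne_zero (E_qcomm_K i m) h)
  rwa [zero_add, ← add_assoc, ← sub_eq_add_neg] at h'

theorem qSerre_antipode {s i j : ℤ} (hij : b j i - b i j = 2 * s)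
    (h : qSerre q s (EgP i) (EgP j) = 0) :
    qSerre q s (op (-(KgP (antipodeWeight i) * EgP i)))
      (op (-(KgP (antipodeWeight j) * EgP j))) = 0 := by
  have hs : -s + -coroot i (antipodeWeight j) - -coroot j (antipodeWeight i) = s := by
    rw [coroot_antipodeWeight j i, coroot_antipodeWeight i j, coroot_alphaX_comm i j]
    linear_combination hij
  rw [qSerre_op, qSerre_neg, qSerre_mul_mul q_ne_zero (commute_K _ _) (E_qcomm_K i _)
    (E_qcomm_K i _) (E_qcomm_K j _), hs, h, mul_zero, smul_zero, neg_zero, op_zero]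

theorem satisfiesUpRel_antipode :
    SatisfiesUpRel (fun i => op (-(KgP (antipodeWeight i) * EgP i)))
      (fun l => op (KgP (-l))) where
  k_mul_k l m := by
    rw [← op_mul, K_mul_K, neg_add_rev]
  k_zero := by
    rw [neg_zero, K_zero, op_one]
  k_qcomm_e l i := by
    refine .op (.neg_left ?_)
    simpa only [map_neg, neg_neg, zero_add] using
      QCommute.mul_left q_ne_zero (.of_commute (commute_K _ (-l))) (E_qcomm_K i (-l))
  e_qcomm_e i j hij := by
    refine .op (.neg_left (.neg_right ?_))
    convert K_mul_E_qcomm_K_mul_E (antipodeWeight j) (antipodeWeight i)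
      (E_qcomm_E (abs_sub_comm i j ▸ hij)) using 2
    rw [coroot_antipodeWeight, coroot_antipodeWeight, coroot_alphaX_comm i j, b_antisymm hij]
    ring
  qSerre_succ i := qSerre_antipode (by rw [b_succ_left, b_succ_right]; norm_num)
    (satisfiesUpRel.qSerre_succ i)
  qSerre_pred i := qSerre_antipode (by rw [b_pred_left, b_pred_right]; norm_num)
    (satisfiesUpRel.qSerre_pred i)

def antipodeOp : Up →ₐ[K] Upᵐᵒᵖ := lift satisfiesUpRel_antipode

def antipode : Up →ₗ[K] Up :=
  (opLinearEquiv K).symm.toLinearMap ∘ₗ antipodeOp.toLinearMap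

theorem antipode_apply (x : Up) : antipode x = unop (antipodeOp x) := rfl

theorem antipode_mul (x y : Up) : antipode (x * y) = antipode y * antipode x := by
  rw [antipode_apply, map_mul, unop_mul]
  rfl

theorem antipode_one : antipode 1 = 1 := by
  rw [antipode_apply, map_one, unop_one]

theorem antipode_K (l : ℤ → ℤ) : antipode (KgP l) = KgP (-l) := by
  rw [antipode_apply, antipodeOp, lift_K, unop_op]

theorem antipode_E (i : ℤ) :
    antipode (EgP i) = -(KgP (-(alphaX i)) * EgP i * KgP (gammaX i - alphaX i)) := by
  have h₀ : coroot i (gammaX i - alphaX i) = 0 := by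
    rw [map_sub, coroot_gammaX, coroot_alphaX_self, b_self]
    rfl
  have hcomm := E_qcomm_K i (gammaX i - alphaX i)
  rw [h₀, neg_zero, QCommute, zpow_zero, one_smul] at hcomm
  rw [antipode_apply, antipodeOp, lift_E, unop_op, mul_assoc, hcomm, ← mul_assoc, K_mul_K]
  congr 3
  rw [antipodeWeight]
  abel

end Antipode

theorem comul_coassoc :
    (Algebra.TensorProduct.assoc K K K Up Up Up).toAlgHom.comp
      ((Algebra.TensorProduct.map comul (.id K Up)).comp comul) =
      (Algebra.TensorProduct.map (.id K Up) comul).comp comul := by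
  refine algHom_ext (fun i => ?_) (fun l => ?_)
  · simp [comul_E, comul_K, TensorProduct.tmul_add, TensorProduct.add_tmul]
    abel
  · simp [comul_K]

theorem counit_rTensor_comul :
    (Algebra.TensorProduct.map counit (.id K Up)).comp comul =
      (Algebra.TensorProduct.lid K Up).symm := by
  refine algHom_ext (fun i => ?_) (fun l => ?_) <;>
    simp [comul_E, comul_K, counit_E, counit_K]

theorem counit_lTensor_comul :
    (Algebra.TensorProduct.map (.id K Up) counit).comp comul =
      (Algebra.TensorProduct.rid K K Up).symm := by
  refine algHom_ext (fun i => ?_) (fun l => ?_) <;>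
    simp [comul_E, comul_K, counit_E, counit_K]

instance : Bialgebra K Up :=
  .ofAlgHom comul counit comul_coassoc counit_rTensor_comul counit_lTensor_comul

theorem mul_antipode_rTensor_comul (x : Up) :
    LinearMap.mul' K Up (antipode.rTensor Up (Coalgebra.comul x)) =
      algebraMap K Up (Coalgebra.counit x) := by
  refine mul'_rTensor_comul_of_adjoin_eq_top adjoin_eq_top antipode_one antipode_mul ?_ x
  rintro _ (⟨i, rfl⟩ | ⟨l, rfl⟩)
  · show LinearMap.mul' K Up (antipode.rTensor Up (comul (EgP i))) =
      algebraMap K Up (counit (EgP i))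
    rw [comul_E, counit_E, map_zero, map_add, LinearMap.rTensor_tmul, LinearMap.rTensor_tmul,
      map_add, LinearMap.mul'_apply, LinearMap.mul'_apply, antipode_K, antipode_E]
    -- `rw [neg_mul]` fails: the instances of the quotient `Up` only agree up to unfolding.
    erw [neg_mul]
    rw [mul_assoc _ (KgP _), K_mul_K, ← neg_sub, neg_add_cancel, K_zero, mul_one, add_neg_cancel]
  · show LinearMap.mul' K Up (antipode.rTensor Up (comul (KgP l))) =
      algebraMap K Up (counit (KgP l))
    rw [comul_K, counit_K, map_one, LinearMap.rTensor_tmul, LinearMap.mul'_apply, antipode_K,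
      K_mul_K, neg_add_cancel, K_zero]

theorem mul_antipode_lTensor_comul (x : Up) :
    LinearMap.mul' K Up (antipode.lTensor Up (Coalgebra.comul x)) =
      algebraMap K Up (Coalgebra.counit x) := by
  refine mul'_lTensor_comul_of_adjoin_eq_top adjoin_eq_top antipode_one antipode_mul ?_ x
  rintro _ (⟨i, rfl⟩ | ⟨l, rfl⟩)
  · show LinearMap.mul' K Up (antipode.lTensor Up (comul (EgP i))) =
      algebraMap K Up (counit (EgP i))
    rw [comul_E, counit_E, map_zero, map_add, LinearMap.lTensor_tmul, LinearMap.lTensor_tmul,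
      map_add, LinearMap.mul'_apply, LinearMap.mul'_apply, antipode_K, antipode_E]
    erw [mul_neg]
    rw [← mul_assoc, ← mul_assoc, K_mul_K, add_neg_cancel, K_zero, one_mul, neg_sub,
      neg_add_cancel]
  · show LinearMap.mul' K Up (antipode.lTensor Up (comul (KgP l))) =
      algebraMap K Up (counit (KgP l))
    rw [comul_K, counit_K, map_one, LinearMap.lTensor_tmul, LinearMap.mul'_apply, antipode_K,
      K_mul_K, add_neg_cancel, K_zero]

instance : HopfAlgebra K Up where
  antipode := antipode
  mul_antipode_rTensor_comul := LinearMap.ext mul_antipode_rTensor_comul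
  mul_antipode_lTensor_comul := LinearMap.ext mul_antipode_lTensor_comul

end Up

/-- There exist a `ℚ(q)`-algebra homomorphism `Δ : U⁺ → U⁺ ⊗ U⁺` with
`Δ E_i = K_{α_i} ⊗ E_i + E_i ⊗ K_{α_i - γ_i}`, `Δ K_λ = K_λ ⊗ K_λ`, a `ℚ(q)`-algebra
homomorphism `ε : U⁺ → ℚ(q)` with `ε E_i = 0`, `ε K_λ = 1`, and a `ℚ(q)`-linear algebra
anti-endomorphism `S` of `U⁺` with `S E_i = -K_{-α_i}E_iK_{γ_i-α_i}`, `S K_λ = K_{-λ}`,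
which make `U⁺` a Hopf algebra: `Δ` is coassociative, `ε` is a counit for `Δ`, and `S`
satisfies the antipode axioms `m ∘ (S ⊗ id) ∘ Δ = η ∘ ε = m ∘ (id ⊗ S) ∘ Δ`. -/
theorem Up_hopfAlgebra :
    ∃ (Δ : Up →ₐ[K] Up ⊗[K] Up) (counit : Up →ₐ[K] K) (S : Up →ₗ[K] Up),
      (∀ i : ℤ,
        Δ (EgP i) = KgP (alphaX i) ⊗ₜ[K] EgP i + EgP i ⊗ₜ[K] KgP (alphaX i - gammaX i)) ∧
      (∀ lam : ℤ → ℤ, Δ (KgP lam) = KgP lam ⊗ₜ[K] KgP lam) ∧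
      (∀ i : ℤ, counit (EgP i) = 0) ∧
      (∀ lam : ℤ → ℤ, counit (KgP lam) = 1) ∧
      (∀ i : ℤ, S (EgP i) = -(KgP (-(alphaX i)) * EgP i * KgP (gammaX i - alphaX i))) ∧
      (∀ lam : ℤ → ℤ, S (KgP lam) = KgP (-lam)) ∧
      (∀ x y : Up, S (x * y) = S y * S x) ∧ S 1 = 1 ∧
      -- coassociativity
      (∀ x : Up,
        (Algebra.TensorProduct.assoc K K K Up Up Up)
            ((Algebra.TensorProduct.map Δ (AlgHom.id K Up)) (Δ x)) =
          (Algebra.TensorProduct.map (AlgHom.id K Up) Δ) (Δ x)) ∧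
      -- counit axioms
      (∀ x : Up,
        (TensorProduct.lid K Up)
            ((TensorProduct.map counit.toLinearMap (LinearMap.id : Up →ₗ[K] Up)) (Δ x)) = x) ∧
      (∀ x : Up,
        (TensorProduct.rid K Up)
            ((TensorProduct.map (LinearMap.id : Up →ₗ[K] Up) counit.toLinearMap) (Δ x)) = x) ∧
      -- antipode axioms
      (∀ x : Up,
        (LinearMap.mul' K Up)
            ((TensorProduct.map S (LinearMap.id : Up →ₗ[K] Up)) (Δ x)) =
          algebraMap K Up (counit x)) ∧
      (∀ x : Up,
        (LinearMap.mul' K Up)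
            ((TensorProduct.map (LinearMap.id : Up →ₗ[K] Up) S) (Δ x)) =
          algebraMap K Up (counit x)) := by
  refine ⟨Bialgebra.comulAlgHom K Up, Bialgebra.counitAlgHom K Up, HopfAlgebra.antipode K,
    Up.comul_E, Up.comul_K, Up.counit_E, Up.counit_K, Up.antipode_E, Up.antipode_K,
    Up.antipode_mul, Up.antipode_one, Coalgebra.coassoc_apply, fun x => ?_, fun x => ?_,
    HopfAlgebra.mul_antipode_rTensor_comul_apply, HopfAlgebra.mul_antipode_lTensor_comul_apply⟩
  · exact (congrArg (TensorProduct.lid K Up) (Coalgebra.rTensor_counit_comul x)).trans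
      (by rw [TensorProduct.lid_tmul, one_smul])
  · exact (congrArg (TensorProduct.rid K Up) (Coalgebra.lTensor_counit_comul x)).trans
      (by rw [TensorProduct.rid_tmul, one_smul])
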